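/- Let h : H → K be an expanding isomorphism between torsion-free subgroups K ⊆ H of a group G (i.e., ⋂_{n∈ℕ} hⁿ(H) = {e}) and F ⊆ P(G) an h-invariant left-invariant ideal. For any limit ordinal α and any family {Aₙ}_{n∈ω} of subsets of H with each Aₙ ∈ τ^{<α}(F), the union A = ⋃_{n∈ω} hⁿ(Aₙ) belongs to τ^α(F). -/

import Mathlib

open Pointwise

/-- A family of subsets of `G` is left-invariant if it is closed under left translations. -/
def LeftInvariant {G : Type} [Group G] (F : Set (Set G)) : Prop :=
  ∀ A ∈ F, ∀ x : G, x • A ∈ F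

/-- A family of subsets is lower if it is closed under taking subsets. -/
def Lower {G : Type} [Group G] (F : Set (Set G)) : Prop :=
  ∀ A B : Set G, A ⊆ B → B ∈ F → A ∈ F

/-- The transfinite iterates `τ^α(F)`. -/
noncomputable def tauIter {G : Type} [Group G] (F : Set (Set G)) : Ordinal → Set (Set G) :=
  Ordinal.lt_wf.fix fun α ih =>
    if α = 0 then F
    else {A | ∀ x y : G, x ≠ y → ∃ β, ∃ h : β < α, x • A ∩ y • A ∈ ih β h}

/-- The image `hⁿ(A) ⊆ G` of a set `A ⊆ H` under the `n`-th iterate of an injective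
endomorphism `φ` of the subgroup `H` (modelling an isomorphism `h : H → K` onto a
subgroup `K = φ(H) ⊆ H`). -/
def iterImg {G : Type} [Group G] {H : Subgroup G} (φ : H →* H) (n : ℕ) (A : Set G) : Set G :=
  Subtype.val '' ((⇑φ)^[n] '' (Subtype.val ⁻¹' A))

/-- Old Mathlib `Monoid.IsTorsionFree` (removed upstream), restated with its original meaning. -/
def Monoid.IsTorsionFree (G : Type*) [Monoid G] : Prop :=
  ∀ g : G, g ≠ 1 → ¬IsOfFinOrder g

/-!
For `x ≠ y` the set `x • A ∩ y • A` is empty unless `z = x⁻¹ * y ∈ H`. Then, `h` being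
expanding, `z ∉ hᴺ(H)` for some `N`; as every `hⁿ(Aₙ)` with `n ≥ N` lies in the subgroup
`hᴺ(H)`, the intersection is covered by `x • U ∪ y • U` with `U = ⋃_{n<N} hⁿ(Aₙ)`. Since `h`
preserves every level `τ^β(F)`, it remains to see that `τ^{<α}(F)` is closed under finite
unions inside a coset of the torsion-free group `H`.

For that, a union `S` of `k` sets of `τ^m(F)` lies in `τ^{m+n}(F)` for a finite `n`. With
`S_T = ⋂_{t ∈ T} t • S`, pigeonhole covers `S_T`, for `|T| > k`, by `k^|T|` sets of lower
level, and `u • S_T ∩ v • S_T = S_{uT ∪ vT}` where, by torsion-freeness, `uT ∪ vT` is larger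
than `T` unless the intersection is empty; so `S = S_{1}` climbs `k` levels above the `S_T`
with `k < |T| ≤ 2k`.
-/

section TauIter

variable {G : Type} [Group G] {F : Set (Set G)}

theorem tauIter_eq (F : Set (Set G)) (α : Ordinal) :
    tauIter F α = if α = 0 then F
      else {A | ∀ x y : G, x ≠ y → ∃ β, ∃ _ : β < α, x • A ∩ y • A ∈ tauIter F β} :=
  WellFounded.fix_eq _ _ _

@[simp]
theorem tauIter_zero (F : Set (Set G)) : tauIter F 0 = F := by
  rw [tauIter_eq, if_pos rfl]

theorem mem_tauIter_iff {α : Ordinal} (hα : α ≠ 0) {A : Set G} :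
    A ∈ tauIter F α ↔ ∀ x y : G, x ≠ y → ∃ β < α, x • A ∩ y • A ∈ tauIter F β := by
  rw [tauIter_eq, if_neg hα]
  simp only [Set.mem_ofPred_eq, exists_prop]

theorem lower_tauIter (hlo : Lower F) (β : Ordinal) : Lower (tauIter F β) := by
  induction β using WellFoundedLT.induction with
  | _ β ih =>
  intro A B hAB hB
  rcases eq_or_ne β 0 with rfl | hβ
  · rw [tauIter_zero] at *
    exact hlo A B hAB hB
  rw [mem_tauIter_iff hβ] at *
  intro x y hxy
  obtain ⟨γ, hγ, hB⟩ := hB x y hxy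
  exact ⟨γ, hγ, ih γ hγ _ _
    (Set.inter_subset_inter (Set.smul_set_mono hAB) (Set.smul_set_mono hAB)) hB⟩

theorem leftInvariant_tauIter (hli : LeftInvariant F) (β : Ordinal) :
    LeftInvariant (tauIter F β) := by
  intro A hA g
  rcases eq_or_ne β 0 with rfl | hβ
  · rw [tauIter_zero] at *
    exact hli A hA g
  rw [mem_tauIter_iff hβ] at *
  intro x y hxy
  simpa only [smul_smul] using hA (x * g) (y * g) ((mul_left_injective g).ne hxy)

theorem tauIter_mono (hli : LeftInvariant F) (hlo : Lower F) : Monotone (tauIter F) := by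
  intro β γ hβγ A hA
  rcases hβγ.eq_or_lt with rfl | hlt
  · exact hA
  rw [mem_tauIter_iff hlt.ne_bot]
  intro x y hxy
  rcases eq_or_ne β 0 with rfl | hβ
  · rw [tauIter_zero] at hA
    exact ⟨0, hlt, by rw [tauIter_zero]; exact hlo _ _ Set.inter_subset_left (hli A hA x)⟩
  obtain ⟨δ, hδ, h⟩ := (mem_tauIter_iff hβ).1 hA x y hxy
  exact ⟨δ, hδ.trans hlt, h⟩

theorem empty_mem_of_mem_tauIter (hlo : Lower F) {x y : G} (hxy : x ≠ y) {β : Ordinal}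
    {A : Set G} (hA : A ∈ tauIter F β) : ∅ ∈ F := by
  induction β using WellFoundedLT.induction generalizing A with
  | _ β ih =>
  rcases eq_or_ne β 0 with rfl | hβ
  · rw [tauIter_zero] at hA
    exact hlo ∅ A (Set.empty_subset A) hA
  obtain ⟨γ, hγ, h⟩ := (mem_tauIter_iff hβ).1 hA x y hxy
  exact ih γ hγ h

end TauIter

theorem smul_inter_smul_subset_union {M α : Type*} [SMul M α] {A U V : Set α} {x y : M}
    (hA : A ⊆ U ∪ V) (hV : Disjoint (x • V) (y • V)) : x • A ∩ y • A ⊆ x • U ∪ y • U := by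
  rintro _ ⟨⟨a, ha, rfl⟩, b, hb, hab⟩
  rcases hA ha with haU | haV
  · exact Or.inl ⟨a, haU, rfl⟩
  rcases hA hb with hbU | hbV
  · exact Or.inr ⟨b, hbU, hab⟩
  exact (Set.disjoint_left.1 hV ⟨a, haV, rfl⟩ ⟨b, hbV, hab⟩).elim

section Cosets

variable {G : Type} [Group G]

theorem inv_mul_mem_of_smul_inter_nonempty {K : Subgroup G} {A B : Set G} {x y : G}
    (hA : A ⊆ K) (hB : B ⊆ K) (h : (x • A ∩ y • B).Nonempty) : x⁻¹ * y ∈ K := by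
  obtain ⟨_, ⟨a, ha, rfl⟩, b, hb, hab⟩ := h
  have hab : y * b = x * a := hab
  rw [show x⁻¹ * y = a * b⁻¹ by rw [← mul_inv_cancel_right y b, hab]; group]
  exact K.mul_mem (hA ha) (K.inv_mem (hB hb))

theorem eq_one_of_isOfFinOrder_of_mem {H : Subgroup G} (htf : Monoid.IsTorsionFree H) {g : G}
    (hg : g ∈ H) (hfin : IsOfFinOrder g) : g = 1 := by
  by_contra h
  exact htf ⟨g, hg⟩ (by simpa using h) (Submonoid.isOfFinOrder_coe.1 hfin)

theorem isOfFinOrder_of_smul_finset_eq [DecidableEq G] {w : G} {T : Finset G} (hT : T.Nonempty)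
    (hw : w • T = T) : IsOfFinOrder w := by
  by_contra hinf
  obtain ⟨t, ht⟩ := hT
  have hstab : w ∈ MulAction.stabilizer G T := hw
  have horbit (n : ℕ) : w ^ n • t ∈ T := by
    rw [← (MulAction.stabilizer G T).pow_mem hstab n]
    exact Finset.smul_mem_smul_finset ht
  refine not_injective_infinite_finite (fun n : ℕ => (⟨w ^ n • t, horbit n⟩ : T)) ?_
  intro m n hmn
  exact injective_pow_iff_not_isOfFinOrder.2 hinf (mul_right_cancel (congrArg Subtype.val hmn))

end Cosets

section Translates

variable {G : Type} [Group G]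

def interTranslates (S : Set G) (T : Finset G) : Set G :=
  ⋂ t ∈ T, t • S

theorem interTranslates_singleton_one (S : Set G) : interTranslates S {1} = S := by
  simp [interTranslates]

theorem smul_interTranslates_inter [DecidableEq G] (S : Set G) (T : Finset G) (u v : G) :
    u • interTranslates S T ∩ v • interTranslates S T = interTranslates S (u • T ∪ v • T) := by
  ext ξ
  simp only [interTranslates, Set.smul_set_iInter, smul_smul, Set.mem_inter_iff, Set.mem_iInter,
    Finset.mem_union, Finset.mem_smul_finset, smul_eq_mul, or_imp, forall_exists_index, and_imp,
    forall_and, forall_apply_eq_imp_iff₂]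

/-- If `u • T = v • T`, then `v⁻¹ * u` permutes `T`, so it has finite order, while a point of
`S_{uT ∪ vT}` puts a conjugate of it into `H`. -/
theorem card_lt_card_smul_union_smul [DecidableEq G] {H : Subgroup G}
    (htf : Monoid.IsTorsionFree H) {S : Set G} {g₀ : G} (hS : S ⊆ g₀ • (H : Set G))
    {T : Finset G} (hT : T.Nonempty) {u v : G} (huv : u ≠ v)
    (hne : (interTranslates S (u • T ∪ v • T)).Nonempty) : T.card < (u • T ∪ v • T).card := by
  by_contra! hle
  have huT : u • T = u • T ∪ v • T := Finset.eq_of_subset_of_card_le Finset.subset_union_left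
    (by rwa [Finset.card_smul_finset])
  have hvT : v • T = u • T ∪ v • T := Finset.eq_of_subset_of_card_le Finset.subset_union_right
    (by rwa [Finset.card_smul_finset])
  have hw : (v⁻¹ * u) • T = T := by rw [mul_smul, huT, ← hvT, inv_smul_smul]
  obtain ⟨t, ht⟩ := hT
  obtain ⟨ξ, hξ⟩ := hne
  have hmem (s : G) (hs : s ∈ u • T ∪ v • T) : ξ ∈ (s * g₀) • (H : Set G) := by
    rw [mul_smul]
    exact Set.smul_set_mono hS (Set.mem_iInter₂.1 hξ s hs)
  have hH : (u * t * g₀)⁻¹ * (v * t * g₀) ∈ H :=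
    inv_mul_mem_of_smul_inter_nonempty subset_rfl subset_rfl
      ⟨ξ, hmem _ (Finset.mem_union_left _ (Finset.smul_mem_smul_finset ht)),
        hmem _ (Finset.mem_union_right _ (Finset.smul_mem_smul_finset ht))⟩
  have hfin : IsOfFinOrder ((u * t * g₀)⁻¹ * (v * t * g₀)) :=
    (isConj_iff.2 ⟨(t * g₀)⁻¹, by group⟩).isOfFinOrder
      (isOfFinOrder_of_smul_finset_eq ⟨t, ht⟩ hw).inv
  exact huv (by simpa using inv_mul_eq_one.1 (eq_one_of_isOfFinOrder_of_mem htf hH hfin))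

variable {F : Set (Set G)} {H : Subgroup G}

theorem interTranslates_mem_tauIter_add (hli : LeftInvariant F) (hlo : Lower F) (hF0 : ∅ ∈ F)
    (htf : Monoid.IsTorsionFree H) {S : Set G} {g₀ : G} (hS : S ⊆ g₀ • (H : Set G))
    {k : ℕ} {L : Ordinal}
    (hbot : ∀ T : Finset G, k < T.card → T.card ≤ 2 * k → interTranslates S T ∈ tauIter F L)
    (d : ℕ) (T : Finset G) (hT : T.Nonempty) (hT2k : T.card ≤ 2 * k) (hTd : k < T.card + d) :
    interTranslates S T ∈ tauIter F (L + d) := by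
  classical
  induction d generalizing T with
  | zero => simpa using hbot T hTd hT2k
  | succ d ih =>
  by_cases hTk : k < T.card
  · exact tauIter_mono hli hlo le_self_add (hbot T hTk hT2k)
  rw [mem_tauIter_iff (lt_of_lt_of_le (by exact_mod_cast d.succ_pos) le_add_self).ne']
  intro u v huv
  refine ⟨L + d, by gcongr; exact_mod_cast d.lt_succ_self, ?_⟩
  rw [smul_interTranslates_inter]
  rcases (interTranslates S (u • T ∪ v • T)).eq_empty_or_nonempty with hE | hE
  · rw [hE]
    exact tauIter_mono hli hlo zero_le (by rwa [tauIter_zero])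
  have hgrow := card_lt_card_smul_union_smul htf hS hT huv hE
  have hle : (u • T ∪ v • T).card ≤ 2 * T.card := (Finset.card_union_le _ _).trans
    (by rw [Finset.card_smul_finset, Finset.card_smul_finset]; omega)
  exact ih _ (Finset.card_pos.1 (by omega)) (by omega) (by omega)

theorem mem_tauIter_add_of_interTranslates (hli : LeftInvariant F) (hlo : Lower F)
    (hF0 : ∅ ∈ F) (htf : Monoid.IsTorsionFree H) {S : Set G} {g₀ : G}
    (hS : S ⊆ g₀ • (H : Set G)) {k : ℕ} (hk : 0 < k) {L : Ordinal}
    (hbot : ∀ T : Finset G, k < T.card → T.card ≤ 2 * k → interTranslates S T ∈ tauIter F L) :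
    S ∈ tauIter F (L + k) := by
  simpa only [interTranslates_singleton_one] using
    interTranslates_mem_tauIter_add hli hlo hF0 htf hS hbot k {1} (Finset.singleton_nonempty 1)
      (by simp only [Finset.card_singleton]; omega) (by simp)

end Translates

section Additivity

variable {G : Type} [Group G] {F : Set (Set G)} {H : Subgroup G}

theorem interTranslates_iUnion_subset {ι : Type} (C : ι → Set G) (T : Finset G) :
    interTranslates (⋃ i, C i) T ⊆ ⋃ f : T → ι, ⋂ t : T, (t : G) • C (f t) := by
  intro ξ hξ
  simp only [interTranslates, Set.mem_iInter₂, Set.smul_set_iUnion, Set.mem_iUnion] at hξ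
  choose f hf using fun t : T => hξ t t.2
  exact Set.mem_iUnion.2 ⟨f, Set.mem_iInter.2 hf⟩

theorem exists_cover_interTranslates_iUnion (hlo : Lower F) {m : Ordinal} (hm : m ≠ 0)
    {ι : Type} [Fintype ι] {C : ι → Set G} {g₀ : G} (hcos : ∀ i, C i ⊆ g₀ • (H : Set G))
    (hC : ∀ i, C i ∈ tauIter F m) {T : Finset G} (hT : Fintype.card ι < T.card) :
    ∃ (D : (T → ι) → Set G) (g₁ : G), interTranslates (⋃ i, C i) T ⊆ ⋃ f, D f ∧
      (∀ f, D f ⊆ g₁ • (H : Set G)) ∧ ∀ f, ∃ a < m, D f ∈ tauIter F a := by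
  obtain ⟨t₀, ht₀⟩ := Finset.card_pos.1 (hT.trans_le' (Nat.zero_le _))
  refine ⟨fun f => ⋂ t : T, (t : G) • C (f t), t₀ * g₀, interTranslates_iUnion_subset C T,
    fun f => ?_, fun f => ?_⟩
  · calc ⋂ t : T, (t : G) • C (f t) ⊆ t₀ • C (f ⟨t₀, ht₀⟩) := Set.iInter_subset _ (⟨t₀, ht₀⟩ : T)
      _ ⊆ t₀ • g₀ • (H : Set G) := Set.smul_set_mono (hcos _)
      _ = (t₀ * g₀) • (H : Set G) := smul_smul _ _ _
  · obtain ⟨t₁, t₂, hne, hf⟩ := Fintype.exists_ne_map_eq_of_card_lt f (by rwa [Fintype.card_coe])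
    obtain ⟨a, ha, hmem⟩ :=
      (mem_tauIter_iff hm).1 (hC (f t₁)) t₁ t₂ (Subtype.coe_injective.ne hne)
    refine ⟨a, ha, lower_tauIter hlo a _ _ (Set.subset_inter (Set.iInter_subset _ t₁) ?_) hmem⟩
    rw [hf]
    exact Set.iInter_subset _ t₂

/-- The increment `n` depends on `m` and `k` only: in the successor case a single `n₀` has to
serve for the infinitely many index sets `T`. -/
theorem exists_iUnion_mem_tauIter_add (hli : LeftInvariant F) (hlo : Lower F)
    (hadd : ∀ A B : Set G, A ∈ F → B ∈ F → A ∪ B ∈ F) (hF0 : ∅ ∈ F)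
    (htf : Monoid.IsTorsionFree H) (m : Ordinal) (k : ℕ) :
    ∃ n : ℕ, ∀ (ι : Type) [Fintype ι] (C : ι → Set G) (g₀ : G), Fintype.card ι ≤ k →
      (∀ i, C i ⊆ g₀ • (H : Set G)) → (∀ i, C i ∈ tauIter F m) →
      (⋃ i, C i) ∈ tauIter F (m + n) := by
  classical
  induction m using WellFoundedLT.induction generalizing k with
  | _ m ih =>
  rcases Ordinal.zero_or_succ_or_isSuccLimit m with rfl | ⟨m₀, rfl⟩ | hlim
  · refine ⟨0, fun ι _ C g₀ _ _ hC => ?_⟩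
    simp only [Nat.cast_zero, add_zero, tauIter_zero] at hC ⊢
    rw [← Set.iSup_eq_iUnion, ← Finset.sup_univ_eq_iSup]
    exact Finset.sup_mem F hF0 (fun A hA B hB => hadd A B hA hB) _ _ fun i _ => hC i
  · obtain ⟨n₀, hn₀⟩ := ih m₀ (Order.lt_succ m₀) ((k + 1) ^ (2 * (k + 1)))
    refine ⟨n₀ + (k + 1), fun ι _ C g₀ hcard hcos hC => ?_⟩
    have hbot (T : Finset G) (hT : k + 1 < T.card) (hT2 : T.card ≤ 2 * (k + 1)) :
        interTranslates (⋃ i, C i) T ∈ tauIter F (m₀ + n₀) := by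
      obtain ⟨D, g₁, hcover, hD, hDa⟩ :=
        exists_cover_interTranslates_iUnion hlo (Order.lt_succ m₀).ne_bot hcos hC (T := T)
          (by omega)
      refine lower_tauIter hlo _ _ _ hcover (hn₀ _ D g₁ ?_ hD fun f => ?_)
      · calc Fintype.card (T → ι) = Fintype.card ι ^ T.card := by simp
          _ ≤ (k + 1) ^ (2 * (k + 1)) :=
            (Nat.pow_le_pow_left (by omega) _).trans (Nat.pow_le_pow_right k.succ_pos hT2)
      · obtain ⟨a, ha, h⟩ := hDa f
        exact tauIter_mono hli hlo (Order.lt_succ_iff.1 ha) h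
    refine tauIter_mono hli hlo ?_
      (mem_tauIter_add_of_interTranslates hli hlo hF0 htf (Set.iUnion_subset hcos) k.succ_pos hbot)
    rw [Nat.cast_add n₀, ← add_assoc]
    gcongr
    exact Order.le_succ m₀
  · refine ⟨k + 1, fun ι _ C g₀ hcard hcos hC =>
      mem_tauIter_add_of_interTranslates hli hlo hF0 htf (Set.iUnion_subset hcos) k.succ_pos
        fun T hT _ => ?_⟩
    obtain ⟨D, g₁, hcover, hD, hDa⟩ :=
      exists_cover_interTranslates_iUnion hlo hlim.ne_bot hcos hC (T := T) (by omega)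
    choose a ha hDa using hDa
    have hsup : Finset.univ.sup a < m := (Finset.sup_lt_iff hlim.bot_lt).2 fun f _ => ha f
    obtain ⟨n, hn⟩ := ih _ hsup (Fintype.card (T → ι))
    refine lower_tauIter hlo m _ _ hcover (tauIter_mono hli hlo (hlim.add_natCast_lt hsup n).le ?_)
    exact hn _ D g₁ le_rfl hD fun f =>
      tauIter_mono hli hlo (Finset.le_sup (Finset.mem_univ f)) (hDa f)

theorem iUnion_mem_tauIter_of_isSuccLimit (hli : LeftInvariant F) (hlo : Lower F)
    (hadd : ∀ A B : Set G, A ∈ F → B ∈ F → A ∪ B ∈ F) (hF0 : ∅ ∈ F)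
    (htf : Monoid.IsTorsionFree H) {α : Ordinal} (hα : Order.IsSuccLimit α) {ι : Type}
    [Fintype ι] {C : ι → Set G} {g₀ : G} (hcos : ∀ i, C i ⊆ g₀ • (H : Set G))
    (hC : ∀ i, ∃ β < α, C i ∈ tauIter F β) : ∃ β < α, (⋃ i, C i) ∈ tauIter F β := by
  choose β hβ hCβ using hC
  have hm : Finset.univ.sup β < α := (Finset.sup_lt_iff hα.bot_lt).2 fun i _ => hβ i
  obtain ⟨n, hn⟩ :=
    exists_iUnion_mem_tauIter_add hli hlo hadd hF0 htf (Finset.univ.sup β) (Fintype.card ι)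
  exact ⟨_, hα.add_natCast_lt hm n, hn ι C g₀ le_rfl hcos fun i =>
    tauIter_mono hli hlo (Finset.le_sup (Finset.mem_univ i)) (hCβ i)⟩

end Additivity

section IterImg

variable {G : Type} [Group G] {H : Subgroup G} (φ : H →* H)

def iterRange (n : ℕ) : Subgroup G :=
  (H.subtype.comp ((show Monoid.End H from φ) ^ n)).range

theorem mem_iterRange {n : ℕ} {g : G} : g ∈ iterRange φ n ↔ ∃ a : H, (((⇑φ)^[n] a : H) : G) = g :=
  Iff.rfl

theorem iterRange_le (n : ℕ) : iterRange φ n ≤ H := by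
  rintro _ ⟨a, rfl⟩
  exact (((show Monoid.End H from φ) ^ n) a).2

theorem iterRange_antitone : Antitone (iterRange φ) := by
  intro N n hNn _ ⟨a, ha⟩
  refine (mem_iterRange φ).2 ⟨(⇑φ)^[n - N] a, ?_⟩
  rw [← Function.iterate_add_apply, Nat.add_sub_cancel' hNn]
  exact ha

theorem exists_notMem_iterRange
    (hexp : ∀ x : H, (∀ n : ℕ, 0 < n → x ∈ Set.range ((⇑φ)^[n])) → x = 1) {z : G}
    (hz : z ≠ 1) : ∃ N, z ∉ iterRange φ N := by
  by_contra! h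
  have hzH : z ∈ H := iterRange_le φ 0 (h 0)
  refine hz (congrArg Subtype.val (hexp ⟨z, hzH⟩ fun n _ => ?_))
  obtain ⟨a, ha⟩ := (mem_iterRange φ).1 (h n)
  exact ⟨a, Subtype.ext ha⟩

theorem iterImg_subset_iterRange (n : ℕ) (A : Set G) : iterImg φ n A ⊆ iterRange φ n := by
  rintro _ ⟨_, ⟨a, _, rfl⟩, rfl⟩
  exact ⟨a, rfl⟩

theorem iterImg_subset (n : ℕ) (A : Set G) : iterImg φ n A ⊆ H :=
  (iterImg_subset_iterRange φ n A).trans (iterRange_le φ n)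

theorem iterImg_zero {A : Set G} (hA : A ⊆ H) : iterImg φ 0 A = A := by
  rw [iterImg, Function.iterate_zero, Set.image_id,
    Set.image_preimage_eq_of_subset (by rwa [Subtype.range_coe])]

theorem iterImg_succ (n : ℕ) (A : Set G) :
    iterImg φ (n + 1) A = iterImg φ 1 (iterImg φ n A) := by
  rw [iterImg, iterImg, iterImg, Function.iterate_one,
    Set.preimage_image_eq _ Subtype.coe_injective, Function.iterate_succ', Set.image_comp]

theorem iterImg_one_inter (hinj : Function.Injective φ) (A B : Set G) :
    iterImg φ 1 (A ∩ B) = iterImg φ 1 A ∩ iterImg φ 1 B := by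
  simp only [iterImg, Function.iterate_one, Set.preimage_inter, Set.image_inter hinj,
    Set.image_inter Subtype.coe_injective]

theorem iterImg_one_smul (c : H) (A : Set G) :
    iterImg φ 1 ((c : G) • A) = ((φ c : H) : G) • iterImg φ 1 A := by
  have hpre : Subtype.val ⁻¹' ((c : G) • A) = c • (Subtype.val ⁻¹' A : Set H) := by
    ext a
    simp [Set.mem_smul_set_iff_inv_smul_mem]
  rw [iterImg, iterImg, Function.iterate_one, hpre, Set.image_smul_distrib, ← H.coe_subtype,
    Set.image_smul_distrib]

end IterImg

section Expanding

variable {G : Type} [Group G] {H : Subgroup G} {F : Set (Set G)} (φ : H →* H)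

theorem iterImg_one_mem_tauIter (hli : LeftInvariant F) (hF0 : ∅ ∈ F)
    (hinj : Function.Injective φ)
    (hinv : ∀ A : Set G, A ⊆ (H : Set G) → (A ∈ F ↔ iterImg φ 1 A ∈ F)) (β : Ordinal)
    {A : Set G} (hAH : A ⊆ H) (hA : A ∈ tauIter F β) : iterImg φ 1 A ∈ tauIter F β := by
  induction β using WellFoundedLT.induction generalizing A with
  | _ β ih =>
  rcases eq_or_ne β 0 with rfl | hβ
  · rw [tauIter_zero] at *
    exact (hinv A hAH).1 hA
  rw [mem_tauIter_iff hβ] at hA ⊢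
  intro x y hxy
  rcases (x • iterImg φ 1 A ∩ y • iterImg φ 1 A).eq_empty_or_nonempty with hE | hE
  · exact ⟨0, pos_iff_ne_zero.2 hβ, by rwa [hE, tauIter_zero]⟩
  -- `x⁻¹ * y = φ c`, so the intersection is `x • φ(A ∩ c • A)`
  obtain ⟨c, hc⟩ := (mem_iterRange φ).1 <| inv_mul_mem_of_smul_inter_nonempty
    (iterImg_subset_iterRange φ 1 A) (iterImg_subset_iterRange φ 1 A) hE
  rw [Function.iterate_one] at hc
  have hc1 : (1 : G) ≠ c := fun h => hxy <| inv_mul_eq_one.1 <| by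
    rw [← hc, ← (Subtype.ext h : (1 : H) = c), map_one, Subgroup.coe_one]
  obtain ⟨γ, hγ, hmem⟩ := hA 1 c hc1
  rw [one_smul] at hmem
  have hEq : x • iterImg φ 1 A ∩ y • iterImg φ 1 A = x • iterImg φ 1 (A ∩ (c : G) • A) := by
    rw [iterImg_one_inter φ hinj, iterImg_one_smul, Set.smul_set_inter, smul_smul, hc,
      mul_inv_cancel_left]
  exact ⟨γ, hγ, hEq ▸ leftInvariant_tauIter hli γ _
    (ih γ hγ (Set.inter_subset_left.trans hAH) hmem) x⟩

theorem iterImg_mem_tauIter (hli : LeftInvariant F) (hF0 : ∅ ∈ F)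
    (hinj : Function.Injective φ)
    (hinv : ∀ A : Set G, A ⊆ (H : Set G) → (A ∈ F ↔ iterImg φ 1 A ∈ F)) {β : Ordinal}
    {A : Set G} (hAH : A ⊆ H) (hA : A ∈ tauIter F β) (n : ℕ) : iterImg φ n A ∈ tauIter F β := by
  induction n with
  | zero => rwa [iterImg_zero φ hAH]
  | succ n ih =>
    rw [iterImg_succ]
    exact iterImg_one_mem_tauIter φ hli hF0 hinj hinv β (iterImg_subset φ n A) ih

theorem iUnion_iterImg_subset (A : ℕ → Set G) (N : ℕ) :
    ⋃ n, iterImg φ n (A n) ⊆ (⋃ n : Fin N, iterImg φ n (A n)) ∪ iterRange φ N := by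
  refine Set.iUnion_subset fun n => ?_
  rcases lt_or_ge n N with hn | hn
  · exact (Set.subset_iUnion (fun i : Fin N => iterImg φ i (A i)) ⟨n, hn⟩).trans
      Set.subset_union_left
  · exact ((iterImg_subset_iterRange φ n _).trans (iterRange_antitone φ hn)).trans
      Set.subset_union_right

end Expanding

theorem stmt_13 {G : Type} [Group G] {H : Subgroup G} (φ : H →* H)
    (hinj : Function.Injective φ) (htf : Monoid.IsTorsionFree H)
    (hexp : ∀ x : H, (∀ n : ℕ, 0 < n → x ∈ Set.range ((⇑φ)^[n])) → x = 1)
    (F : Set (Set G)) (hli : LeftInvariant F) (hlo : Lower F)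
    (hadd : ∀ A B : Set G, A ∈ F → B ∈ F → A ∪ B ∈ F)
    (hinv : ∀ A : Set G, A ⊆ (H : Set G) → (A ∈ F ↔ iterImg φ 1 A ∈ F))
    (α : Ordinal) (hα : Order.IsSuccLimit α) (A : ℕ → Set G)
    (hAH : ∀ n, A n ⊆ (H : Set G))
    (hAmem : ∀ n, ∃ β < α, A n ∈ tauIter F β) :
    (⋃ n : ℕ, iterImg φ n (A n)) ∈ tauIter F α := by
  choose β hβα hAβ using hAmem
  set B := ⋃ n, iterImg φ n (A n)
  have hBH : B ⊆ H := Set.iUnion_subset fun n => iterImg_subset φ n _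
  rw [mem_tauIter_iff hα.ne_bot]
  intro x y hxy
  have hF0 : ∅ ∈ F := empty_mem_of_mem_tauIter hlo hxy (hAβ 0)
  rcases (x • B ∩ y • B).eq_empty_or_nonempty with hE | hE
  · exact ⟨0, hα.bot_lt, by rwa [hE, tauIter_zero]⟩
  have hcoset : y • (H : Set G) = x • (H : Set G) :=
    ((leftCoset_eq_iff H).2 (inv_mul_mem_of_smul_inter_nonempty hBH hBH hE)).symm
  obtain ⟨N, hN⟩ := exists_notMem_iterRange φ hexp (mt inv_mul_eq_one.1 hxy)
  set U := ⋃ n : Fin N, iterImg φ n (A n)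
  have hUH : U ⊆ H := Set.iUnion_subset fun n => iterImg_subset φ n _
  obtain ⟨γ, hγ, hU⟩ : ∃ γ < α, U ∈ tauIter F γ :=
    iUnion_mem_tauIter_of_isSuccLimit hli hlo hadd hF0 htf hα (g₀ := 1)
      (fun n => by rw [one_smul]; exact iterImg_subset φ n _)
      fun n => ⟨β n, hβα n, iterImg_mem_tauIter φ hli hF0 hinj hinv (hAH n) (hAβ n) n⟩
  obtain ⟨δ, hδ, hxyU⟩ : ∃ δ < α, x • U ∪ y • U ∈ tauIter F δ := by
    rw [Set.union_eq_iUnion]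
    refine iUnion_mem_tauIter_of_isSuccLimit hli hlo hadd hF0 htf hα (g₀ := x)
      (Bool.forall_bool.2 ⟨hcoset ▸ Set.smul_set_mono hUH, Set.smul_set_mono hUH⟩)
      (Bool.forall_bool.2 ⟨?_, ?_⟩) <;>
    exact ⟨γ, hγ, leftInvariant_tauIter hli γ U hU _⟩
  refine ⟨δ, hδ, lower_tauIter hlo δ _ _ (smul_inter_smul_subset_union
    (iUnion_iterImg_subset φ A N) ?_) hxyU⟩
  exact Set.disjoint_iff_inter_eq_empty.2 <| Set.not_nonempty_iff_eq_empty.1 fun h =>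
    hN (inv_mul_mem_of_smul_inter_nonempty subset_rfl subset_rfl h)
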